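/- There is an absolute constant C > 0 such that for every pair of natural numbers s, t with t ≤ s and every real 0 < β ≤ 1, there exists a natural number d ≤ C·(t + log₂(1/β) + 1) and an average-case (s−t, β)-extractor Ext : {0,1}^s × {0,1}^d → {0,1}^s. -/

import Mathlib

open Classical

/-- Probability of `P` under the uniform distribution on a finite type. -/
noncomputable def pr {α : Type*} [Fintype α] (P : α → Prop) : ℝ :=
  ((Finset.univ.filter P).card : ℝ) / (Fintype.card α : ℝ)

/-- `f : {0,1}^n → ℝ^d` is `(ε,δ)`-concentrated at `μ`. -/
def Concentrated (n d : ℕ) (ε δ : ℝ)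
    (f : (Fin n → Bool) → Fin d → ℝ) (μ : Fin d → ℝ) : Prop :=
  pr (fun X : Fin n → Bool => ∃ j, |f X j - μ j| > ε) ≤ δ

/-- A deterministic owner for `k` rounds of `(ε,δ)`-concentrated functions
`{0,1}^n → ℝ^d`: given the history of responses `Y_1,…,Y_{i-1}`, it produces
a function `f_i` together with a point `μ_i` at which `f_i` is concentrated. -/
structure Owner (n k d : ℕ) (ε δ : ℝ) where
  act : List (Fin d → ℝ) → (((Fin n → Bool) → Fin d → ℝ) × (Fin d → ℝ))
  conc : ∀ ys : List (Fin d → ℝ), ys.length < k →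
    Concentrated n d ε δ (act ys).1 (act ys).2

/-- A one-query steward with randomness complexity `m`: in each round it chooses
a query point from its randomness and the past query answers, and it chooses a
response from its randomness and the past and current query answers. -/
structure Steward (n k d m : ℕ) where
  q : (Fin m → Bool) → List (Fin d → ℝ) → (Fin n → Bool)
  r : (Fin m → Bool) → List (Fin d → ℝ) → (Fin d → ℝ) → (Fin d → ℝ)

/-- The interaction `O ↔ S(Z)` for `i` rounds: the list of triples `(Y_i, W_i, μ_i)`. -/
noncomputable def run {n k d m : ℕ} {ε δ : ℝ} (O : Owner n k d ε δ) (S : Steward n k d m)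
    (Z : Fin m → Bool) : ℕ → List ((Fin d → ℝ) × (Fin d → ℝ) × (Fin d → ℝ))
  | 0 => []
  | i + 1 =>
    let h := run O S Z i
    let fμ := O.act (h.map fun p => p.1)
    let X := S.q Z (h.map fun p => p.2.1)
    let W := fμ.1 X
    h ++ [(S.r Z (h.map fun p => p.2.1) W, W, fμ.2)]

/-- `S` is a one-query `(ε',δ')`-steward for `k` adaptively chosen
`(ε,δ)`-concentrated functions `{0,1}^n → ℝ^d`. -/
def IsSteward (n k d m : ℕ) (ε δ ε' δ' : ℝ) (S : Steward n k d m) : Prop :=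
  ∀ O : Owner n k d ε δ,
    pr (fun Z : Fin m → Bool =>
      ∃ p ∈ run O S Z k, ∃ j : Fin d, |p.1 j - p.2.2 j| > ε') ≤ δ'

/-- `prMass p P`: probability of the event `P` under the mass function `p`. -/
noncomputable def prMass {Ω : Type*} [Fintype Ω] (p : Ω → ℝ) (P : Ω → Prop) : ℝ :=
  ∑ ω ∈ Finset.univ.filter P, p ω

/-- `Ext : {0,1}^s × {0,1}^d → {0,1}^m` is an average-case `(κ, β)`-extractor:
for every pair of random variables `(X, V)` on a common finite probability space
with `H̃_∞(X|V) ≥ κ` (equivalently, `E_{v∼V}[max_x Pr[X=x | V=v]] ≤ 2^{-κ}`),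
the joint distributions of `(V, Ext(X,Y))` (with `Y` uniform, independent of `(X,V)`)
and `(V, Z)` (with `Z` uniform, independent of `V`) are `β`-close in total variation. -/
def IsAvgExtractor (s d m : ℕ) (κ β : ℝ)
    (Ext : (Fin s → Bool) → (Fin d → Bool) → (Fin m → Bool)) : Prop :=
  ∀ (Ω : Type) [Fintype Ω] (Vt : Type) [Fintype Vt]
    (p : Ω → ℝ) (X : Ω → (Fin s → Bool)) (V : Ω → Vt),
    (∀ ω, 0 ≤ p ω) → (∑ ω, p ω) = 1 →
    (∑ v : Vt, ⨆ x : Fin s → Bool, prMass p (fun ω => X ω = x ∧ V ω = v)) ≤ (2 : ℝ) ^ (-κ) →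
    (1 / 2) * ∑ v : Vt, ∑ z : Fin m → Bool,
      |(∑ y : Fin d → Bool, prMass p (fun ω => V ω = v ∧ Ext (X ω) y = z)) / 2 ^ d
        - prMass p (fun ω => V ω = v) / 2 ^ m| ≤ β


/-!
A uniformly random `Ext : {0,1}^s × {0,1}^d → {0,1}^s` works. For a set `S` of sources and a test
`T` of outputs, the discrepancy `∑_{x ∈ S, y} (1[Ext x y ∈ T] - |T| / 2^s)` is a sum of `|S| 2^d`
independent centred `[-1, 1]`-valued variables, so by Chernoff it exceeds `ε (|S| + K) 2^d`,
`K = 2^(s-t)`, with probability at most `exp (-2 ε² K 2^d)`. Once `2^d ≳ 2^t / β²` this beats the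
union bound over the `4^(2^s)` pairs `(S, T)`, so some `Ext` has small discrepancy everywhere.

For a flat source on `S`, half the `ℓ¹` distance from uniform is the discrepancy at the best test
`T`, hence at most `ε (|S| + K)`. Since that distance is sublinear in the source distribution `q`,
the layer-cake decomposition of `q` into indicators bounds it by `ε (∑ q + K max q)`. Summing over
the values `v` of `V`, with `∑_v max_x Pr[X = x, V = v] ≤ 2^(t-s) = 1/K`, gives `2ε = β`.
-/

open Finset Real

lemma pr_exists_le_sum {α ι : Type*} [Fintype α] [Fintype ι] (E : ι → α → Prop) :
    pr (fun a => ∃ i, E i a) ≤ ∑ i, pr (E i) := by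
  unfold pr
  rw [← Finset.sum_div]
  gcongr
  refine le_trans (b := ((univ.biUnion fun i => univ.filter (E i)).card : ℝ)) ?_ ?_
  · exact mod_cast card_le_card fun a ha => by simpa using ha
  · exact mod_cast card_biUnion_le

lemma exists_forall_not_of_sum_pr_lt_one {α ι : Type*} [Fintype α] [Nonempty α] [Fintype ι]
    (E : ι → α → Prop) (h : ∑ i, pr (E i) < 1) : ∃ a, ∀ i, ¬ E i a := by
  by_contra! hE
  have hall : pr (fun a => ∃ i, E i a) = 1 := by
    simp [pr, hE, Fintype.card_ne_zero]
  linarith [pr_exists_le_sum E]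

lemma pr_lt_le_exp_mul_sum {α : Type*} [Fintype α] (F : α → ℝ) (a : ℝ) {l : ℝ} (hl : 0 ≤ l) :
    pr (fun x => a < F x) ≤ exp (-(l * a)) * (∑ x, exp (l * F x)) / Fintype.card α := by
  unfold pr
  gcongr
  rw [mul_sum]
  calc ((univ.filter fun x => a < F x).card : ℝ)
      = ∑ x ∈ univ.filter fun x => a < F x, 1 := by simp
    _ ≤ ∑ x ∈ univ.filter fun x => a < F x, exp (-(l * a)) * exp (l * F x) := by
        refine sum_le_sum fun x hx => ?_
        rw [← exp_add, one_le_exp_iff]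
        nlinarith [(mem_filter.1 hx).2]
    _ ≤ ∑ x, exp (-(l * a)) * exp (l * F x) :=
        sum_le_sum_of_subset_of_nonneg (filter_subset _ _) fun _ _ _ => by positivity

lemma exp_mul_le_cosh_add_mul_sinh {x : ℝ} (hx : |x| ≤ 1) (l : ℝ) :
    exp (l * x) ≤ cosh l + x * sinh l := by
  rw [abs_le] at hx
  have h := convexOn_exp.2 (Set.mem_univ l) (Set.mem_univ (-l))
    (show 0 ≤ (1 + x) / 2 by linarith) (show 0 ≤ (1 - x) / 2 by linarith) (by ring)
  simp only [smul_eq_mul] at h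
  calc exp (l * x) = exp ((1 + x) / 2 * l + (1 - x) / 2 * -l) := by ring_nf
    _ ≤ (1 + x) / 2 * exp l + (1 - x) / 2 * exp (-l) := h
    _ = cosh l + x * sinh l := by rw [cosh_eq, sinh_eq]; ring

/-- Hoeffding's lemma for the uniform distribution. -/
lemma sum_exp_mul_le {γ : Type*} [Fintype γ] {f : γ → ℝ} (hf : ∀ z, |f z| ≤ 1)
    (hf0 : ∑ z, f z = 0) (l : ℝ) :
    ∑ z, exp (l * f z) ≤ Fintype.card γ * exp (l ^ 2 / 2) :=
  calc ∑ z, exp (l * f z) ≤ ∑ z, (cosh l + f z * sinh l) :=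
        sum_le_sum fun z _ => exp_mul_le_cosh_add_mul_sinh (hf z) l
    _ = Fintype.card γ * cosh l := by
        rw [sum_add_distrib, ← sum_mul, hf0]; simp
    _ ≤ Fintype.card γ * exp (l ^ 2 / 2) := by gcongr; exact cosh_le_exp_half_sq l

/-- Chernoff bound: the values of a uniformly random `G : ι → γ` are independent uniform samples. -/
lemma pr_lt_sum_comp_le_exp {ι γ : Type*} [Fintype ι] [DecidableEq ι] [Fintype γ] {f : γ → ℝ}
    (hf : ∀ z, |f z| ≤ 1) (hf0 : ∑ z, f z = 0) (P : Finset ι) (a : ℝ) {l : ℝ} (hl : 0 ≤ l) :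
    pr (fun G : ι → γ => a < ∑ p ∈ P, f (G p)) ≤ exp (l ^ 2 * #P / 2 - l * a) := by
  set g : ι → γ → ℝ := fun p z => if p ∈ P then exp (l * f z) else 1
  have hprod : ∀ G : ι → γ, exp (l * ∑ p ∈ P, f (G p)) = ∏ p, g p (G p) := by
    intro G
    rw [mul_sum, exp_sum, prod_ite_mem, univ_inter]
  have hg : ∀ p, (∑ z, g p z) / Fintype.card γ ≤ if p ∈ P then exp (l ^ 2 / 2) else 1 := by
    intro p
    by_cases hp : p ∈ P
    · simp only [g, hp, if_true]
      exact div_le_of_le_mul₀ (by positivity) (by positivity)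
        ((sum_exp_mul_le hf hf0 l).trans_eq (mul_comm _ _))
    · simp only [g, hp, if_false, sum_const, card_univ, nsmul_eq_mul, mul_one]
      exact div_self_le_one _
  calc pr (fun G : ι → γ => a < ∑ p ∈ P, f (G p))
      ≤ exp (-(l * a)) * (∑ G : ι → γ, exp (l * ∑ p ∈ P, f (G p))) / Fintype.card (ι → γ) :=
        pr_lt_le_exp_mul_sum _ a hl
    _ = exp (-(l * a)) * ∏ p, (∑ z, g p z) / Fintype.card γ := by
        rw [Fintype.card_fun, Nat.cast_pow, prod_div_distrib, prod_const, card_univ, mul_div_assoc]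
        simp only [hprod, Fintype.prod_sum]
    _ ≤ exp (-(l * a)) * ∏ p, if p ∈ P then exp (l ^ 2 / 2) else 1 := by
        gcongr with p
        exact hg p
    _ = exp (l ^ 2 * #P / 2 - l * a) := by
        rw [prod_ite_mem, univ_inter, prod_const, ← exp_nat_mul, ← exp_add]
        ring_nf

lemma sum_abs_eq_two_mul_sum_pos {γ : Type*} [Fintype γ] {w : γ → ℝ} (hw : ∑ z, w z = 0) :
    ∑ z, |w z| = 2 * ∑ z ∈ univ.filter (fun z => 0 < w z), w z := by
  have h : ∀ z, |w z| = 2 * (if 0 < w z then w z else 0) - w z := fun z => by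
    split_ifs with h
    · rw [abs_of_pos h]; ring
    · rw [abs_of_nonpos (not_lt.1 h)]; ring
  simp only [h, sum_sub_distrib, ← mul_sum, hw, sub_zero, sum_filter]

/-- Layer-cake decomposition: subtracting the smallest nonzero value of `q` times the indicator
of its support leaves a function with smaller support, bounded by `M` minus that value. -/
theorem le_of_forall_indicator_le {α : Type*} [Fintype α] (E : (α → ℝ) → ℝ)
    (hadd : ∀ f g, E (f + g) ≤ E f + E g) (hsmul : ∀ c : ℝ, 0 ≤ c → ∀ f, E (c • f) = c * E f)
    {A B : ℝ} (hind : ∀ S : Finset α, E (fun x => if x ∈ S then 1 else 0) ≤ A * #S + B)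
    {q : α → ℝ} (hq : ∀ x, 0 ≤ q x) {M : ℝ} (hM0 : 0 ≤ M) (hM : ∀ x, q x ≤ M) :
    E q ≤ A * ∑ x, q x + B * M := by
  have hE0 : E 0 = 0 := by simpa using hsmul 0 le_rfl 0
  set S := univ.filter fun x => q x ≠ 0
  have hmemS : ∀ x, x ∈ S ↔ q x ≠ 0 := by simp [S]
  rcases S.eq_empty_or_nonempty with hS0 | hSne
  · have hq0 : q = 0 := funext fun x => not_not.1 fun hx => by
      simpa [hS0] using (hmemS x).2 hx
    have hB : 0 ≤ B := by simpa [← Pi.zero_def, hE0] using hind ∅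
    rw [hq0, hE0]
    simp only [Pi.zero_apply, sum_const_zero, mul_zero, zero_add]
    positivity
  obtain ⟨x₀, hx₀, hmin⟩ := S.exists_min_image q hSne
  set m := q x₀
  set indS : α → ℝ := fun x => if x ∈ S then 1 else 0
  set q' := q - m • indS
  have hq'_of_mem : ∀ x ∈ S, q' x = q x - m := fun x hx => by simp [q', indS, hx]
  have hq'_of_not_mem : ∀ x ∉ S, q' x = 0 := fun x hx => by
    have hqx : q x = 0 := not_not.1 fun h => hx ((hmemS x).2 h)
    simp [q', indS, hx, hqx]
  have hq' : ∀ x, 0 ≤ q' x := fun x => by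
    by_cases hx : x ∈ S
    · rw [hq'_of_mem x hx]; linarith [hmin x hx]
    · rw [hq'_of_not_mem x hx]
  have hq'M : ∀ x, q' x ≤ M - m := fun x => by
    by_cases hx : x ∈ S
    · rw [hq'_of_mem x hx]; linarith [hM x]
    · rw [hq'_of_not_mem x hx]; linarith [hM x₀]
  have hdec : #(univ.filter fun x => q' x ≠ 0) < #S := by
    refine card_lt_card ⟨fun x hx => ?_, fun h => ?_⟩
    · by_contra hxS
      simp [hq'_of_not_mem x hxS] at hx
    · simpa [hq'_of_mem x₀ hx₀, m] using h hx₀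
  have hsum : ∑ x, q' x = ∑ x, q x - m * #S := by
    simp [q', indS, sum_sub_distrib, sum_ite_mem, mul_comm]
  have ih := le_of_forall_indicator_le E hadd hsmul hind hq' (by linarith [hM x₀]) hq'M
  calc E q = E (m • indS + q') := by rw [add_sub_cancel]
    _ ≤ m * E indS + E q' := by rw [← hsmul m (hq x₀)]; exact hadd _ _
    _ ≤ m * (A * #S + B) + (A * ∑ x, q' x + B * (M - m)) := by
        gcongr
        · exact hq x₀
        · exact hind S
    _ = A * ∑ x, q x + B * M := by rw [hsum]; ring
termination_by #(univ.filter fun x => q x ≠ 0)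
decreasing_by exact hdec

section Extractor

variable {α β γ : Type*} [Fintype β] [Fintype γ]

noncomputable def centeredIndicator (T : Finset γ) (z : γ) : ℝ :=
  (if z ∈ T then 1 else 0) - #T / Fintype.card γ

lemma abs_centeredIndicator_le_one (T : Finset γ) (z : γ) : |centeredIndicator T z| ≤ 1 := by
  have h0 : 0 ≤ (#T : ℝ) / Fintype.card γ := by positivity
  have h1 : (#T : ℝ) / Fintype.card γ ≤ 1 :=
    div_le_one_of_le₀ (mod_cast card_le_univ T) (Nat.cast_nonneg _)
  rw [centeredIndicator, abs_le]
  split_ifs <;> constructor <;> linarith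

lemma sum_centeredIndicator (T : Finset γ) : ∑ z, centeredIndicator T z = 0 := by
  rcases isEmpty_or_nonempty γ with hγ | hγ
  · simp
  · have hγ : (Fintype.card γ : ℝ) ≠ 0 := mod_cast Fintype.card_ne_zero
    simp [centeredIndicator, sum_sub_distrib, sum_ite_mem, mul_div_cancel₀ _ hγ]

lemma centeredIndicator_univ (z : γ) : centeredIndicator univ z = 0 := by
  have : Nonempty γ := ⟨z⟩
  simp [centeredIndicator, Fintype.card_ne_zero]

/-- `∑ x, extBias Ext z x * q x` is the signed difference at `z` between the output
distribution of `Ext` on a source of distribution `q` and the uniform distribution. -/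
noncomputable def extBias (Ext : α → β → γ) (z : γ) (x : α) : ℝ :=
  pr (fun y => Ext x y = z) - (Fintype.card γ : ℝ)⁻¹

lemma sum_extBias_eq [Nonempty β] (Ext : α → β → γ) (T : Finset γ) (x : α) :
    ∑ z ∈ T, extBias Ext z x = (∑ y, centeredIndicator T (Ext x y)) / Fintype.card β := by
  have hβ : (Fintype.card β : ℝ) ≠ 0 := mod_cast Fintype.card_ne_zero
  have hfib : ∀ y, (if Ext x y ∈ T then (1 : ℝ) else 0) = ∑ z ∈ T, if Ext x y = z then 1 else 0 :=
    fun y => by rw [sum_ite_eq]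
  simp only [extBias, pr, centeredIndicator, natCast_card_filter, sum_sub_distrib, hfib]
  rw [sum_comm]
  field_simp
  rw [mul_sub, mul_sum]
  field_simp
  simp [div_eq_mul_inv]

lemma sum_extBias_eq_zero [Nonempty β] (Ext : α → β → γ) (x : α) : ∑ z, extBias Ext z x = 0 := by
  simp [sum_extBias_eq, centeredIndicator_univ]

lemma exists_forall_sum_extBias_le [Fintype α] [DecidableEq α] [DecidableEq β] [Nonempty β]
    [Nonempty γ] {ε K : ℝ} (hε : 0 ≤ ε)
    (h : (2 : ℝ) ^ Fintype.card α * 2 ^ Fintype.card γ *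
      exp (-(2 * ε ^ 2 * K * Fintype.card β)) < 1) :
    ∃ Ext : α → β → γ, ∀ (S : Finset α) (T : Finset γ),
      ∑ z ∈ T, ∑ x ∈ S, extBias Ext z x ≤ ε * (#S + K) := by
  set bad : Finset α × Finset γ → (α × β → γ) → Prop := fun ST G =>
    ε * (#ST.1 + K) * Fintype.card β < ∑ p ∈ ST.1 ×ˢ univ, centeredIndicator ST.2 (G p)
  -- Chernoff at exponent `2ε`: `2ε² |S| |β| - 2ε · ε (|S| + K) |β| = -2ε² K |β|`.
  have hbad : ∀ ST, pr (bad ST) ≤ exp (-(2 * ε ^ 2 * K * Fintype.card β)) := fun ST => by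
    refine (pr_lt_sum_comp_le_exp (abs_centeredIndicator_le_one ST.2) (sum_centeredIndicator ST.2)
      _ _ (mul_nonneg zero_le_two hε)).trans_eq ?_
    rw [card_product, card_univ]
    push_cast
    ring_nf
  obtain ⟨G, hG⟩ := exists_forall_not_of_sum_pr_lt_one bad <| by
    calc ∑ ST, pr (bad ST) ≤ ∑ _ST : Finset α × Finset γ, exp (-(2 * ε ^ 2 * K * Fintype.card β)) :=
          sum_le_sum fun ST _ => hbad ST
      _ < 1 := by simpa [Fintype.card_finset] using h
  refine ⟨Function.curry G, fun S T => ?_⟩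
  have hβ : (0 : ℝ) < Fintype.card β := mod_cast Fintype.card_pos
  have hST := hG (S, T)
  simp only [bad, not_lt, sum_product] at hST
  rw [sum_comm]
  simp only [sum_extBias_eq, ← sum_div, Function.curry_apply]
  rwa [div_le_iff₀ hβ]

lemma sum_abs_sum_extBias_mul_le [Fintype α] [Nonempty β] {Ext : α → β → γ} {ε K : ℝ}
    (hExt : ∀ S T, ∑ z ∈ T, ∑ x ∈ S, extBias Ext z x ≤ ε * (#S + K)) {q : α → ℝ}
    (hq : ∀ x, 0 ≤ q x) :
    ∑ z, |∑ x, extBias Ext z x * q x| ≤ 2 * ε * ∑ x, q x + 2 * ε * K * ⨆ x, q x := by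
  refine le_of_forall_indicator_le (fun q => ∑ z, |∑ x, extBias Ext z x * q x|) ?_ ?_
    (fun S => ?_) hq (Real.iSup_nonneg hq) (fun x => le_ciSup (Set.finite_range q).bddAbove x)
  · intro f g
    refine (sum_le_sum fun z _ => ?_).trans_eq sum_add_distrib
    simpa only [Pi.add_apply, mul_add, sum_add_distrib] using abs_add_le _ _
  · intro c hc f
    simp only [Pi.smul_apply, smul_eq_mul, mul_left_comm _ c, ← mul_sum, abs_mul, abs_of_nonneg hc]
  · simp only [mul_ite, mul_one, mul_zero, sum_ite_mem, univ_inter]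
    rw [sum_abs_eq_two_mul_sum_pos (by rw [sum_comm]; simp [sum_extBias_eq_zero])]
    linarith [hExt S (univ.filter fun z => 0 < ∑ x ∈ S, extBias Ext z x)]

end Extractor

lemma prMass_eq_sum_prMass_and {Ω κ : Type*} [Fintype Ω] [Fintype κ] (p : Ω → ℝ) (X : Ω → κ)
    (P : Ω → Prop) : prMass p P = ∑ x, prMass p (fun ω => X ω = x ∧ P ω) := by
  unfold prMass
  rw [← sum_fiberwise (univ.filter P) X p]
  refine sum_congr rfl fun x _ => ?_
  congr 1
  ext ω
  simp [and_comm]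

theorem isAvgExtractor_of_forall_sum_extBias_le {s d m : ℕ} {κ ε : ℝ} (hε : 0 ≤ ε)
    {Ext : (Fin s → Bool) → (Fin d → Bool) → (Fin m → Bool)}
    (hExt : ∀ S T, ∑ z ∈ T, ∑ x ∈ S, extBias Ext z x ≤ ε * (#S + 2 ^ κ)) :
    IsAvgExtractor s d m κ (2 * ε) Ext := by
  intro Ω _ Vt _ p X V hp0 hp1 hent
  set q : Vt → (Fin s → Bool) → ℝ := fun v x => prMass p (fun ω => X ω = x ∧ V ω = v)
  have hq0 : ∀ v x, 0 ≤ q v x := fun v x => sum_nonneg fun ω _ => hp0 ω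
  have hmarg : ∀ v, prMass p (fun ω => V ω = v) = ∑ x, q v x := fun v =>
    prMass_eq_sum_prMass_and p X _
  have hjoint : ∀ v y z, prMass p (fun ω => V ω = v ∧ Ext (X ω) y = z) =
      ∑ x, if Ext x y = z then q v x else 0 := fun v y z => by
    rw [prMass_eq_sum_prMass_and p X]
    refine sum_congr rfl fun x _ => ?_
    split_ifs with h
    · congr 1; ext ω; constructor <;> rintro ⟨rfl, h'⟩ <;> simp_all
    · refine sum_eq_zero fun ω hω => ?_
      simp only [mem_filter, mem_univ, true_and] at hω
      exact absurd (hω.1 ▸ hω.2.2) h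
  have hdiff : ∀ v z, (∑ y, prMass p (fun ω => V ω = v ∧ Ext (X ω) y = z)) / 2 ^ d
      - prMass p (fun ω => V ω = v) / 2 ^ m = ∑ x, extBias Ext z x * q v x := fun v z => by
    simp only [hjoint, hmarg, extBias, pr, natCast_card_filter, sub_mul, sum_sub_distrib,
      Fintype.card_fun, Fintype.card_bool, Fintype.card_fin, Nat.cast_pow, Nat.cast_ofNat]
    rw [sum_comm, sum_div, ← mul_sum, inv_mul_eq_div]
    congr 1
    refine sum_congr rfl fun x _ => ?_
    rw [div_mul_eq_mul_div, sum_mul]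
    simp [ite_mul]
  have htotal : ∑ v, ∑ x, q v x = 1 := by
    simp only [← hmarg]
    simpa [prMass, hp1] using (prMass_eq_sum_prMass_and p V fun _ => True).symm
  calc (1 / 2) * ∑ v, ∑ z, |(∑ y, prMass p (fun ω => V ω = v ∧ Ext (X ω) y = z)) / 2 ^ d
        - prMass p (fun ω => V ω = v) / 2 ^ m|
      = (1 / 2) * ∑ v, ∑ z, |∑ x, extBias Ext z x * q v x| := by simp only [hdiff]
    _ ≤ (1 / 2) * ∑ v, (2 * ε * ∑ x, q v x + 2 * ε * 2 ^ κ * ⨆ x, q v x) := by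
        gcongr with v
        exact sum_abs_sum_extBias_mul_le hExt (hq0 v)
    _ = ε * ∑ v, ∑ x, q v x + ε * 2 ^ κ * ∑ v, ⨆ x, q v x := by
        rw [sum_add_distrib, ← mul_sum, ← mul_sum]; ring
    _ ≤ ε * 1 + ε * 2 ^ κ * 2 ^ (-κ) := by rw [htotal]; gcongr
    _ = 2 * ε := by rw [mul_assoc, ← rpow_add two_pos, add_neg_cancel, rpow_zero]; ring

lemma two_pow_lt_exp {n : ℕ} (hn : n ≠ 0) : (2 : ℝ) ^ n < exp n := by
  rw [← exp_one_pow]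
  exact pow_lt_pow_left₀ (by linarith [add_one_lt_exp (one_ne_zero (α := ℝ))]) zero_le_two hn

lemma two_pow_le_sq_mul_two_pow_ceil (t : ℕ) {β : ℝ} (hβ : 0 < β) :
    (2 : ℝ) ^ (t + 2) ≤ β ^ 2 * 2 ^ ⌈(t : ℝ) + 2 + 2 * logb 2 (1 / β)⌉₊ := by
  have hL : (2 : ℝ) ^ (2 * logb 2 (1 / β)) = (β ^ 2)⁻¹ := by
    rw [mul_comm, rpow_mul zero_le_two, rpow_logb two_pos (by norm_num) (by positivity), rpow_two]
    ring
  calc (2 : ℝ) ^ (t + 2) = β ^ 2 * 2 ^ ((t : ℝ) + 2 + 2 * logb 2 (1 / β)) := by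
        have ht : (2 : ℝ) ^ ((t : ℝ) + 2) = 2 ^ (t + 2) := by
          rw [← rpow_natCast]; push_cast; rfl
        rw [rpow_add two_pos, hL, ht]
        field_simp
    _ ≤ β ^ 2 * 2 ^ ⌈(t : ℝ) + 2 + 2 * logb 2 (1 / β)⌉₊ := by
        rw [← rpow_natCast 2 ⌈_⌉₊]
        exact mul_le_mul_of_nonneg_left (rpow_le_rpow_of_exponent_le one_le_two (Nat.le_ceil _))
          (sq_nonneg β)

lemma two_pow_mul_two_pow_mul_exp_lt_one {s t d : ℕ} {β : ℝ}
    (hd : (2 : ℝ) ^ (t + 2) ≤ β ^ 2 * 2 ^ d) :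
    (2 : ℝ) ^ 2 ^ s * 2 ^ 2 ^ s * exp (-(2 * (β / 2) ^ 2 * 2 ^ ((s : ℝ) - t) * 2 ^ d)) < 1 := by
  have hexp : 2 * 2 ^ s ≤ 2 * (β / 2) ^ 2 * 2 ^ ((s : ℝ) - t) * 2 ^ d := by
    rw [rpow_sub two_pos, rpow_natCast, rpow_natCast]
    have h2t : (0 : ℝ) < 2 ^ t := by positivity
    rw [pow_add] at hd
    field_simp
    nlinarith [pow_pos (two_pos (α := ℝ)) s]
  calc (2 : ℝ) ^ 2 ^ s * 2 ^ 2 ^ s * exp (-(2 * (β / 2) ^ 2 * 2 ^ ((s : ℝ) - t) * 2 ^ d))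
      ≤ 2 ^ (2 * 2 ^ s) * exp (-(2 * 2 ^ s)) := by
        rw [← pow_add, ← two_mul]
        exact mul_le_mul_of_nonneg_left (exp_le_exp.2 (neg_le_neg hexp)) (by positivity)
    _ < exp (2 * 2 ^ s) * exp (-(2 * 2 ^ s)) :=
        mul_lt_mul_of_pos_right (mod_cast two_pow_lt_exp (by positivity)) (exp_pos _)
    _ = 1 := by rw [← exp_add, add_neg_cancel, exp_zero]

/-- there is an absolute constant `C > 0` such that for all naturals
`t ≤ s` and every `0 < β ≤ 1` there exists an average-case `(s−t, β)`-extractor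
`Ext : {0,1}^s × {0,1}^d → {0,1}^s` with seed length `d ≤ C·(t + log₂(1/β) + 1)`. -/
theorem avg_extractor_exists :
    ∃ C : ℝ, 0 < C ∧
      ∀ s t : ℕ, t ≤ s → ∀ β : ℝ, 0 < β → β ≤ 1 →
        ∃ d : ℕ, (d : ℝ) ≤ C * ((t : ℝ) + Real.logb 2 (1 / β) + 1) ∧
          ∃ Ext : (Fin s → Bool) → (Fin d → Bool) → (Fin s → Bool),
            IsAvgExtractor s d s ((s : ℝ) - (t : ℝ)) β Ext := by
  refine ⟨3, by norm_num, fun s t _ β hβ0 hβ1 => ?_⟩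
  have hL : 0 ≤ logb 2 (1 / β) := logb_nonneg one_lt_two (one_le_one_div hβ0 hβ1)
  set d := ⌈(t : ℝ) + 2 + 2 * logb 2 (1 / β)⌉₊
  refine ⟨d, ?_, ?_⟩
  · have := Nat.ceil_lt_add_one (by positivity : 0 ≤ (t : ℝ) + 2 + 2 * logb 2 (1 / β))
    linarith [(Nat.cast_nonneg t : (0 : ℝ) ≤ t)]
  obtain ⟨Ext, hExt⟩ := exists_forall_sum_extBias_le (α := Fin s → Bool) (β := Fin d → Bool)
    (γ := Fin s → Bool) (ε := β / 2) (K := 2 ^ ((s : ℝ) - t)) (by positivity) <| by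
      simpa only [Fintype.card_fun, Fintype.card_bool, Fintype.card_fin, Nat.cast_pow,
        Nat.cast_ofNat] using
        two_pow_mul_two_pow_mul_exp_lt_one (s := s) (two_pow_le_sq_mul_two_pow_ceil t hβ0)
  refine ⟨Ext, ?_⟩
  simpa [mul_div_cancel₀] using isAvgExtractor_of_forall_sum_extBias_le (by positivity) hExt
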